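/- Let H = ℓ²(ℕ) ⊗ ℓ²(ℤ), let ζ_k : 𝕋 → ℂ be ζ_k(z) = z^k, and define the unitary U = Σ_{i≥0} e_{i,i} ⊗ 1 ⊗ ζ_i acting on H ⊗ L²(𝕋), and π(x) = U*(x ⊗ 1)U for x ∈ B(H). Then for the SU_q(2) monomials, π(α^k γ^l (γ*)^m) = α^k γ^l (γ*)^m ⊗ ζ_k (acting on H ⊗ L²(𝕋)), where ζ_k acts as the multiplication operator on L²(𝕋). -/

import Mathlib

/-!
A monomial `x = α^k γ^l (γ*)^m` is homogeneous of degree `k` for the grading of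
`ℓ²(ℕ) ⊗ ℓ²(ℤ)` by the first index: its matrix coefficient `⟨e_{a,b}, x e_{i,j}⟩` vanishes
unless `a + k = i`, because `α` lowers that index by one and `γ` preserves it. On basis vectors
`U` shifts the Fourier index by the first index, so the coefficient of `U* (x ⊗ 1) U` from
`e_{i,j,n}` to `e_{a,b,c}` carries the constraint `c + a = n + i`, which for a nonzero
coefficient is `c = n + k`: exactly the constraint produced by `(x ⊗ 1)(1 ⊗ ζ_k)`.
-/

open scoped lp
open ContinuousLinearMap

namespace lp

variable {ι : Type*} [DecidableEq ι]

lemma inner_single_one_left (p : ι) (v : ℓ²(ι, ℂ)) :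
    inner ℂ (lp.single 2 p (1 : ℂ) : ℓ²(ι, ℂ)) v = v p := by
  simp [lp.inner_single_left]

lemma inner_single_one_single_one (p p' : ι) :
    inner ℂ (lp.single 2 p (1 : ℂ) : ℓ²(ι, ℂ)) (lp.single 2 p' 1) = if p = p' then 1 else 0 := by
  rw [inner_single_one_left, lp.single_apply, Pi.single_apply]

lemma ext_inner_single_one {v w : ℓ²(ι, ℂ)}
    (h : ∀ p, inner ℂ (lp.single 2 p (1 : ℂ) : ℓ²(ι, ℂ)) v = inner ℂ (lp.single 2 p 1) w) :
    v = w :=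
  lp.ext <| funext fun p => by simpa only [inner_single_one_left] using h p

lemma ext_single_one {A B : ℓ²(ι, ℂ) →L[ℂ] ℓ²(ι, ℂ)}
    (h : ∀ p, A (lp.single 2 p 1) = B (lp.single 2 p 1)) : A = B :=
  lp.ext_continuousLinearMap (by norm_num) fun p => ContinuousLinearMap.ext_ring (h p)

lemma inner_single_one_mul_apply (x y : ℓ²(ι, ℂ) →L[ℂ] ℓ²(ι, ℂ)) (p p' : ι) :
    inner ℂ (lp.single 2 p (1 : ℂ) : ℓ²(ι, ℂ)) ((x * y) (lp.single 2 p' 1)) =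
      ∑' r, inner ℂ (lp.single 2 p (1 : ℂ) : ℓ²(ι, ℂ)) (x (lp.single 2 r 1)) *
        inner ℂ (lp.single 2 r (1 : ℂ) : ℓ²(ι, ℂ)) (y (lp.single 2 p' 1)) := by
  rw [mul_apply_eq_comp, ← adjoint_inner_left, lp.inner_eq_tsum]
  refine tsum_congr fun r => ?_
  rw [← inner_single_one_left, ← inner_single_one_left, adjoint_inner_right, RCLike.inner_apply,
    inner_conj_symm, mul_comm]

end lp

namespace SUq2

section Homogeneous

variable {ι : Type*} [DecidableEq ι] (deg : ι → ℤ)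

def IsHomogeneous (x : ℓ²(ι, ℂ) →L[ℂ] ℓ²(ι, ℂ)) (d : ℤ) : Prop :=
  ∀ p p', inner ℂ (lp.single 2 p (1 : ℂ) : ℓ²(ι, ℂ)) (x (lp.single 2 p' 1)) ≠ 0 →
    deg p + d = deg p'

variable {deg}

lemma isHomogeneous_one : IsHomogeneous deg 1 0 := by
  intro p p' h
  rw [one_apply_eq_self, lp.inner_single_one_single_one] at h
  simp_all

lemma IsHomogeneous.adjoint {x : ℓ²(ι, ℂ) →L[ℂ] ℓ²(ι, ℂ)} {d : ℤ} (hx : IsHomogeneous deg x d) :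
    IsHomogeneous deg (ContinuousLinearMap.adjoint x) (-d) := by
  intro p p' h
  rw [adjoint_inner_right, Ne, inner_eq_zero_symm] at h
  linarith [hx p' p h]

lemma IsHomogeneous.mul {x y : ℓ²(ι, ℂ) →L[ℂ] ℓ²(ι, ℂ)} {d e : ℤ} (hx : IsHomogeneous deg x d)
    (hy : IsHomogeneous deg y e) : IsHomogeneous deg (x * y) (d + e) := by
  intro p p' h
  rw [lp.inner_single_one_mul_apply] at h
  obtain ⟨r, hr⟩ : ∃ r, inner ℂ (lp.single 2 p (1 : ℂ) : ℓ²(ι, ℂ)) (x (lp.single 2 r 1)) *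
      inner ℂ (lp.single 2 r (1 : ℂ) : ℓ²(ι, ℂ)) (y (lp.single 2 p' 1)) ≠ 0 := by
    by_contra! h0
    simp [h0] at h
  rw [mul_ne_zero_iff] at hr
  linarith [hx p r hr.1, hy r p' hr.2]

lemma IsHomogeneous.pow {x : ℓ²(ι, ℂ) →L[ℂ] ℓ²(ι, ℂ)} {d : ℤ} (hx : IsHomogeneous deg x d) (n : ℕ) :
    IsHomogeneous deg (x ^ n) (n * d) := by
  induction n with
  | zero => simpa using isHomogeneous_one
  | succ n ih => simpa [pow_succ, add_mul] using ih.mul hx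

lemma isHomogeneous_of_apply_single_one {x : ℓ²(ι, ℂ) →L[ℂ] ℓ²(ι, ℂ)} {d : ℤ} (c : ι → ℂ)
    (σ : ι → ι) (hx : ∀ p, x (lp.single 2 p 1) = c p • lp.single 2 (σ p) 1)
    (hσ : ∀ p, c p ≠ 0 → deg (σ p) + d = deg p) : IsHomogeneous deg x d := by
  intro p p' h
  rw [hx, inner_smul_right, lp.inner_single_one_single_one] at h
  obtain rfl : p = σ p' := by by_contra hp; simp [hp] at h
  exact hσ p' (left_ne_zero_of_mul h)

end Homogeneous

section SUq2Generators

abbrev rowDegree (p : ℕ × ℤ) : ℤ := p.1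

variable {q : ℝ} {α γ : ℓ²(ℕ × ℤ, ℂ) →L[ℂ] ℓ²(ℕ × ℤ, ℂ)}

lemma isHomogeneous_alpha
    (hα : ∀ (i : ℕ) (j : ℤ), α (lp.single 2 (i, j) (1 : ℂ))
      = ((Real.sqrt (1 - q ^ (2 * i)) : ℝ) : ℂ) • lp.single 2 (i - 1, j) (1 : ℂ)) :
    IsHomogeneous rowDegree α 1 := by
  refine isHomogeneous_of_apply_single_one _ (fun p => (p.1 - 1, p.2)) (fun p => hα p.1 p.2) ?_
  rintro ⟨i, j⟩ hc
  -- `i - 1` truncates at `i = 0`, where the coefficient `√(1 - q ^ 0)` vanishes.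
  have hi : i ≠ 0 := by rintro rfl; simp at hc
  simp only [rowDegree]
  omega

lemma isHomogeneous_gamma
    (hγ : ∀ (i : ℕ) (j : ℤ), γ (lp.single 2 (i, j) (1 : ℂ))
      = ((q : ℂ) ^ i) • lp.single 2 (i, j + 1) (1 : ℂ)) :
    IsHomogeneous rowDegree γ 0 :=
  isHomogeneous_of_apply_single_one _ (fun p => (p.1, p.2 + 1)) (fun p => hγ p.1 p.2)
    fun _ _ => add_zero _

lemma isHomogeneous_monomial
    (hα : ∀ (i : ℕ) (j : ℤ), α (lp.single 2 (i, j) (1 : ℂ))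
      = ((Real.sqrt (1 - q ^ (2 * i)) : ℝ) : ℂ) • lp.single 2 (i - 1, j) (1 : ℂ))
    (hγ : ∀ (i : ℕ) (j : ℤ), γ (lp.single 2 (i, j) (1 : ℂ))
      = ((q : ℂ) ^ i) • lp.single 2 (i, j + 1) (1 : ℂ)) (k : ℤ) (l m : ℕ) :
    IsHomogeneous rowDegree
      ((if 0 ≤ k then α ^ k.toNat else (ContinuousLinearMap.adjoint α) ^ (-k).toNat)
        * γ ^ l * (ContinuousLinearMap.adjoint γ) ^ m) k := by
  have hαk : IsHomogeneous rowDegree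
      (if 0 ≤ k then α ^ k.toNat else (ContinuousLinearMap.adjoint α) ^ (-k).toNat) k := by
    split_ifs with hk
    · simpa [hk] using (isHomogeneous_alpha hα).pow k.toNat
    · convert (isHomogeneous_alpha hα).adjoint.pow (-k).toNat
      omega
  have hγ₀ := isHomogeneous_gamma hγ
  simpa using (hαk.mul (hγ₀.pow l)).mul (hγ₀.adjoint.pow m)

end SUq2Generators

end SUq2

theorem stmt14_general (q : ℝ)
    (α γ : lp (fun _ : ℕ × ℤ => ℂ) 2 →L[ℂ] lp (fun _ : ℕ × ℤ => ℂ) 2)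
    (hα : ∀ (i : ℕ) (j : ℤ), α (lp.single 2 (i, j) (1 : ℂ))
        = ((Real.sqrt (1 - q ^ (2 * i)) : ℝ) : ℂ) • lp.single 2 (i - 1, j) (1 : ℂ))
    (hγ : ∀ (i : ℕ) (j : ℤ), γ (lp.single 2 (i, j) (1 : ℂ))
        = ((q : ℂ) ^ i) • lp.single 2 (i, j + 1) (1 : ℂ))
    (k : ℤ) (l m : ℕ)
    (amp : (lp (fun _ : ℕ × ℤ => ℂ) 2 →L[ℂ] lp (fun _ : ℕ × ℤ => ℂ) 2)
         → (lp (fun _ : ℕ × ℤ × ℤ => ℂ) 2 →L[ℂ] lp (fun _ : ℕ × ℤ × ℤ => ℂ) 2))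
    (hamp : ∀ (x : lp (fun _ : ℕ × ℤ => ℂ) 2 →L[ℂ] lp (fun _ : ℕ × ℤ => ℂ) 2)
      (i i' : ℕ) (j j' n n' : ℤ),
      (inner ℂ (lp.single 2 (i, j, n) (1 : ℂ)) ((amp x) (lp.single 2 (i', j', n') (1 : ℂ))) : ℂ)
        = (if n = n' then (1 : ℂ) else 0)
          * (inner ℂ (lp.single 2 (i, j) (1 : ℂ)) (x (lp.single 2 (i', j') (1 : ℂ))) : ℂ))
    (U : lp (fun _ : ℕ × ℤ × ℤ => ℂ) 2 →L[ℂ] lp (fun _ : ℕ × ℤ × ℤ => ℂ) 2)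
    (hU : ∀ (i : ℕ) (j n : ℤ),
      U (lp.single 2 (i, j, n) (1 : ℂ)) = lp.single 2 (i, j, n + (i : ℤ)) (1 : ℂ))
    (Z : lp (fun _ : ℕ × ℤ × ℤ => ℂ) 2 →L[ℂ] lp (fun _ : ℕ × ℤ × ℤ => ℂ) 2)
    (hZ : ∀ (i : ℕ) (j n : ℤ),
      Z (lp.single 2 (i, j, n) (1 : ℂ)) = lp.single 2 (i, j, n + k) (1 : ℂ)) :
    (ContinuousLinearMap.adjoint U).comp
        ((amp ((if 0 ≤ k then α ^ k.toNat else (ContinuousLinearMap.adjoint α) ^ (-k).toNat)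
            * γ ^ l * (ContinuousLinearMap.adjoint γ) ^ m)).comp U)
      = (amp ((if 0 ≤ k then α ^ k.toNat else (ContinuousLinearMap.adjoint α) ^ (-k).toNat)
            * γ ^ l * (ContinuousLinearMap.adjoint γ) ^ m)).comp Z := by
  have hx := SUq2.isHomogeneous_monomial hα hγ k l m
  generalize (if 0 ≤ k then α ^ k.toNat else (ContinuousLinearMap.adjoint α) ^ (-k).toNat)
    * γ ^ l * (ContinuousLinearMap.adjoint γ) ^ m = x at hx ⊢
  refine lp.ext_single_one fun ⟨i, j, n⟩ => lp.ext_inner_single_one fun ⟨a, b, c⟩ => ?_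
  rw [ContinuousLinearMap.comp_apply, ContinuousLinearMap.comp_apply,
    ContinuousLinearMap.comp_apply, ContinuousLinearMap.adjoint_inner_right, hU, hU, hZ, hamp, hamp]
  by_cases h0 : inner ℂ (lp.single 2 (a, b) (1 : ℂ)) (x (lp.single 2 (i, j) 1)) = 0
  · simp [h0]
  · have hdeg : (a : ℤ) + k = i := hx (a, b) (i, j) h0
    exact congrArg (· * _) (if_congr (by omega) rfl rfl)

/-- Transference identity for `SU_q(2)`: modelling `ℓ²(ℕ) ⊗ ℓ²(ℤ) ⊗ L²(𝕋)` as
`ℓ²(ℕ × ℤ × ℤ)` (via the Fourier basis of `L²(𝕋)`), with `U = Σ_i e_{ii} ⊗ 1 ⊗ ζ_i`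
(so `U(e_i ⊗ f_j ⊗ g_n) = e_i ⊗ f_j ⊗ g_{n+i}`), the amplification `amp x = x ⊗ 1`, and
`Z = 1 ⊗ 1 ⊗ ζ_k` the multiplication operator by `ζ_k` on the last leg, one has
`π(α^k γ^l (γ*)^m) = U* (α^k γ^l (γ*)^m ⊗ 1) U = (α^k γ^l (γ*)^m ⊗ 1)(1 ⊗ ζ_k)`,
i.e. `π` of the monomial equals `α^k γ^l (γ*)^m ⊗ ζ_k`. -/
theorem stmt14 (q : ℝ) (hq : q ∈ Set.Ioo (-1 : ℝ) 1) (hq0 : q ≠ 0)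
    (α γ : lp (fun _ : ℕ × ℤ => ℂ) 2 →L[ℂ] lp (fun _ : ℕ × ℤ => ℂ) 2)
    (hα : ∀ (i : ℕ) (j : ℤ), α (lp.single 2 (i, j) (1 : ℂ))
        = ((Real.sqrt (1 - q ^ (2 * i)) : ℝ) : ℂ) • lp.single 2 (i - 1, j) (1 : ℂ))
    (hγ : ∀ (i : ℕ) (j : ℤ), γ (lp.single 2 (i, j) (1 : ℂ))
        = ((q : ℂ) ^ i) • lp.single 2 (i, j + 1) (1 : ℂ))
    (k : ℤ) (l m : ℕ)
    (amp : (lp (fun _ : ℕ × ℤ => ℂ) 2 →L[ℂ] lp (fun _ : ℕ × ℤ => ℂ) 2)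
         → (lp (fun _ : ℕ × ℤ × ℤ => ℂ) 2 →L[ℂ] lp (fun _ : ℕ × ℤ × ℤ => ℂ) 2))
    (hamp : ∀ (x : lp (fun _ : ℕ × ℤ => ℂ) 2 →L[ℂ] lp (fun _ : ℕ × ℤ => ℂ) 2)
      (i i' : ℕ) (j j' n n' : ℤ),
      (inner ℂ (lp.single 2 (i, j, n) (1 : ℂ)) ((amp x) (lp.single 2 (i', j', n') (1 : ℂ))) : ℂ)
        = (if n = n' then (1 : ℂ) else 0)
          * (inner ℂ (lp.single 2 (i, j) (1 : ℂ)) (x (lp.single 2 (i', j') (1 : ℂ))) : ℂ))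
    (U : lp (fun _ : ℕ × ℤ × ℤ => ℂ) 2 →L[ℂ] lp (fun _ : ℕ × ℤ × ℤ => ℂ) 2)
    (hU : ∀ (i : ℕ) (j n : ℤ),
      U (lp.single 2 (i, j, n) (1 : ℂ)) = lp.single 2 (i, j, n + (i : ℤ)) (1 : ℂ))
    (Z : lp (fun _ : ℕ × ℤ × ℤ => ℂ) 2 →L[ℂ] lp (fun _ : ℕ × ℤ × ℤ => ℂ) 2)
    (hZ : ∀ (i : ℕ) (j n : ℤ),
      Z (lp.single 2 (i, j, n) (1 : ℂ)) = lp.single 2 (i, j, n + k) (1 : ℂ)) :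
    (ContinuousLinearMap.adjoint U).comp
        ((amp ((if 0 ≤ k then α ^ k.toNat else (ContinuousLinearMap.adjoint α) ^ (-k).toNat)
            * γ ^ l * (ContinuousLinearMap.adjoint γ) ^ m)).comp U)
      = (amp ((if 0 ≤ k then α ^ k.toNat else (ContinuousLinearMap.adjoint α) ^ (-k).toNat)
            * γ ^ l * (ContinuousLinearMap.adjoint γ) ^ m)).comp Z :=
  stmt14_general q α γ hα hγ k l m amp hamp U hU Z hZ
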